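/- arXiv:2405.08650 — 4 statements merged into one kernel-verified Lean document; each statement's English description precedes it below -/
import Mathlib

section
/- Let p be a prime with p ≡ 3 or 5 (mod 8) and let B_p ⊆ ℤ be the union over m ∈ {3,4,6} of {x + 2p·((m·x²) mod p) : x ∈ {0,...,p−1}}. Then for every integer n, the number of ordered pairs (b,b') ∈ B_p² with b + b' = n is at most 18. -/
/-- Ruzsa's set `B_p ⊆ ℤ`. -/
def Bp (p : ℕ) : Set ℤ :=
  {y | ∃ m ∈ ({3, 4, 6} : Set ℤ), ∃ x : ℕ, x < p ∧ y = (x : ℤ) + 2 * p * ((m * (x : ℤ) ^ 2) % p)}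

def fB (p : ℕ) (m : ℤ) (x : ℕ) : ℤ := (x : ℤ) + 2 * p * ((m * (x : ℤ) ^ 2) % p)

lemma quad_card {F : Type*} [Field F] [DecidableEq F] (a b c : F) (ha : a ≠ 0)
    (s : Finset F) (hs : ∀ z ∈ s, a * z ^ 2 + b * z + c = 0) : s.card ≤ 2 := by
  classical
  set Q : Polynomial F := Polynomial.C a * Polynomial.X ^ 2 + Polynomial.C b * Polynomial.X
    + Polynomial.C c with hQdef
  have hdeg : Q.natDegree = 2 := Polynomial.natDegree_quadratic ha
  have hQ0 : Q ≠ 0 := by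
    intro h
    rw [h, Polynomial.natDegree_zero] at hdeg
    exact two_ne_zero hdeg.symm
  have hsub : s ⊆ Q.roots.toFinset := by
    intro z hz
    rw [Multiset.mem_toFinset, Polynomial.mem_roots hQ0]
    simpa [hQdef, Polynomial.IsRoot] using hs z hz
  calc s.card ≤ Q.roots.toFinset.card := Finset.card_le_card hsub
    _ ≤ Multiset.card Q.roots := Q.roots.toFinset_card_le
    _ ≤ Q.natDegree := Polynomial.card_roots' Q
    _ = 2 := hdeg

lemma key (p : ℕ) (hp : p.Prime) (hp11 : 11 ≤ p) (m m' : ℤ)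
    (hm : m = 3 ∨ m = 4 ∨ m = 6) (hm' : m' = 3 ∨ m' = 4 ∨ m' = 6) (n : ℤ) :
    ((Finset.range p).filter (fun x => ∃ x' < p, n = fB p m x + fB p m' x')).card ≤ 2 := by
  classical
  haveI : Fact p.Prime := ⟨hp⟩
  have hp0 : (0:ℤ) < p := by exact_mod_cast hp.pos
  set s : ℤ := n % (2 * (p:ℤ)) with hsdef
  set t : ℤ := (n - s) / (2 * (p:ℤ)) with htdef
  set S := (Finset.range p).filter (fun x => ∃ x' < p, n = fB p m x + fB p m' x') with hS
  have hinj : Set.InjOn (fun x : ℕ => (x : ZMod p)) ↑S := by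
    intro x hx y hy hxy
    simp only [hS, Finset.coe_filter, Set.mem_setOf_eq, Finset.mem_range] at hx hy
    have h1 : (x : ZMod p).val = x := ZMod.val_cast_of_lt hx.1
    have h2 : (y : ZMod p).val = y := ZMod.val_cast_of_lt hy.1
    rw [← h1, ← h2]
    exact congrArg ZMod.val hxy
  rw [← Finset.card_image_of_injOn hinj]
  have hp1112 : p = 11 ∨ 13 ≤ p := by
    rcases Nat.lt_or_ge p 12 with h | h
    · left; omega
    · rcases Nat.lt_or_ge p 13 with h' | h'
      · exfalso
        have h12 : p = 12 := by omega
        rw [h12] at hp; norm_num at hp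
      · right; exact h'
  have ha : ((m + m' : ℤ) : ZMod p) ≠ 0 := by
    rw [Ne, ZMod.intCast_zmod_eq_zero_iff_dvd]
    intro hdvd
    have hle : (p:ℤ) ≤ m + m' := by
      apply Int.le_of_dvd _ hdvd
      rcases hm with rfl|rfl|rfl <;> rcases hm' with rfl|rfl|rfl <;> norm_num
    rcases hp1112 with rfl | h13
    · norm_num at hdvd hle
      rcases hm with rfl|rfl|rfl <;> rcases hm' with rfl|rfl|rfl <;> revert hdvd <;> norm_num
    · have h13' : (13:ℤ) ≤ p := by exact_mod_cast h13
      rcases hm with rfl|rfl|rfl <;> rcases hm' with rfl|rfl|rfl <;> omega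
  apply quad_card ((m + m' : ℤ) : ZMod p) ((-2 * m' * s : ℤ) : ZMod p)
    ((m' * s ^ 2 - t : ℤ) : ZMod p) ha
  intro z hz
  simp only [Finset.mem_image] at hz
  obtain ⟨x, hxS, rfl⟩ := hz
  simp only [hS, Finset.mem_filter, Finset.mem_range] at hxS
  obtain ⟨hxp, x', hx'p, hn⟩ := hxS
  set r : ℤ := (m * (x:ℤ)^2) % p with hrdef
  set r' : ℤ := (m' * (x':ℤ)^2) % p with hr'def
  have hr0 : 0 ≤ r := Int.emod_nonneg _ (by positivity)
  have hrp : r < p := Int.emod_lt_of_pos _ hp0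
  have hr'0 : 0 ≤ r' := Int.emod_nonneg _ (by positivity)
  have hr'p : r' < p := Int.emod_lt_of_pos _ hp0
  have hn2 : n = ((x:ℤ) + x') + 2 * (p:ℤ) * (r + r') := by
    rw [hn]; unfold fB; rw [← hrdef, ← hr'def]; ring
  have hxb : (x:ℤ) < p := by exact_mod_cast hxp
  have hx'b : (x':ℤ) < p := by exact_mod_cast hx'p
  have hseq : s = (x:ℤ) + x' := by
    rw [hsdef, hn2, Int.add_mul_emod_self_left]
    exact Int.emod_eq_of_lt (by positivity) (by omega)
  have hteq : t = r + r' := by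
    rw [htdef, hn2, hseq]
    rw [show ((x:ℤ) + x') + 2 * (p:ℤ) * (r + r') - ((x:ℤ) + x') = 2 * (p:ℤ) * (r + r') by ring]
    exact Int.mul_ediv_cancel_left _ (by positivity)
  -- cast to ZMod p
  have e1 : ((r : ℤ) : ZMod p) = ((m : ZMod p) * (x : ZMod p) ^ 2) := by
    rw [hrdef, ZMod.intCast_mod]
    push_cast
    ring
  have e2 : ((r' : ℤ) : ZMod p) = ((m' : ZMod p) * (x' : ZMod p) ^ 2) := by
    rw [hr'def, ZMod.intCast_mod]
    push_cast
    ring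
  have ex' : ((x' : ℕ) : ZMod p) = ((s : ℤ) : ZMod p) - ((x : ℕ) : ZMod p) := by
    have h2 := congrArg (fun z : ℤ => (z : ZMod p)) hseq
    push_cast at h2
    linear_combination -h2
  have et : ((t : ℤ) : ZMod p) = ((r : ℤ) : ZMod p) + ((r' : ℤ) : ZMod p) := by
    rw [hteq]; push_cast; ring
  rw [ex'] at e2
  push_cast at e1 e2 et ⊢
  linear_combination -e1 - e2 - et

lemma Bp_mem_iff {p : ℕ} {y : ℤ} :
    y ∈ Bp p ↔ ∃ m, (m = 3 ∨ m = 4 ∨ m = 6) ∧ ∃ x : ℕ, x < p ∧ y = fB p m x := by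
  simp [Bp, fB, Set.mem_setOf_eq, and_assoc]

open scoped Classical in
lemma keyC (p : ℕ) (hp : p.Prime) (hp11 : 11 ≤ p) (m : ℤ)
    (hm : m = 3 ∨ m = 4 ∨ m = 6) (n : ℤ) :
    ((Finset.range p).filter (fun x => n - fB p m x ∈ Bp p)).card ≤ 6 := by
  classical
  have hsub : (Finset.range p).filter (fun x => n - fB p m x ∈ Bp p) ⊆
      ((Finset.range p).filter (fun x => ∃ x' < p, n = fB p m x + fB p 3 x')) ∪
      ((Finset.range p).filter (fun x => ∃ x' < p, n = fB p m x + fB p 4 x')) ∪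
      ((Finset.range p).filter (fun x => ∃ x' < p, n = fB p m x + fB p 6 x')) := by
    intro x hx
    simp only [Finset.mem_filter, Finset.mem_range, Finset.mem_union] at hx ⊢
    obtain ⟨hxp, hmem⟩ := hx
    rw [Bp_mem_iff] at hmem
    obtain ⟨m', hm', x', hx'p, he⟩ := hmem
    have he' : n = fB p m x + fB p m' x' := by omega
    rcases hm' with rfl | rfl | rfl
    · exact Or.inl (Or.inl ⟨hxp, x', hx'p, he'⟩)
    · exact Or.inl (Or.inr ⟨hxp, x', hx'p, he'⟩)
    · exact Or.inr ⟨hxp, x', hx'p, he'⟩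
  calc ((Finset.range p).filter (fun x => n - fB p m x ∈ Bp p)).card
      ≤ _ := Finset.card_le_card hsub
    _ ≤ _ := Finset.card_union_le _ _
    _ ≤ 6 := by
        have h1 := key p hp hp11 m 3 hm (Or.inl rfl) n
        have h2 := key p hp hp11 m 4 hm (Or.inr (Or.inl rfl)) n
        have h3 := key p hp hp11 m 6 hm (Or.inr (Or.inr rfl)) n
        have h4 := Finset.card_union_le
          ((Finset.range p).filter (fun x => ∃ x' < p, n = fB p m x + fB p 3 x'))
          ((Finset.range p).filter (fun x => ∃ x' < p, n = fB p m x + fB p 4 x'))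
        omega

open scoped Classical in
theorem stmt4 (p : ℕ) (hp : p.Prime) (h8 : p % 8 = 3 ∨ p % 8 = 5) (n : ℤ) :
    ({q : ℤ × ℤ | q.1 ∈ Bp p ∧ q.2 ∈ Bp p ∧ q.1 + q.2 = n}).ncard ≤ 18 := by
  classical
  set P := {q : ℤ × ℤ | q.1 ∈ Bp p ∧ q.2 ∈ Bp p ∧ q.1 + q.2 = n} with hP
  rcases Nat.lt_or_ge p 11 with hsmall | hp11
  · -- p = 3 or p = 5, so |Bp p| ≤ 3p ≤ 15
    have hple : p ≤ 5 := by omega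
    set M : Finset ℤ := ({3, 4, 6} : Finset ℤ) with hM
    set BpF : Finset ℤ := (M ×ˢ Finset.range p).image (fun q => fB p q.1 q.2) with hBpF
    have hBp : Bp p ⊆ ↑BpF := by
      intro y hy
      rw [Bp_mem_iff] at hy
      obtain ⟨m, hm, x, hx, rfl⟩ := hy
      simp only [hBpF, Finset.coe_image, Set.mem_image, Finset.mem_coe, Finset.mem_product,
        Finset.mem_range]
      exact ⟨(m, x), ⟨by simp [hM]; tauto, hx⟩, rfl⟩
    have hsub : P ⊆ (fun b : ℤ => (b, n - b)) '' ↑BpF := by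
      rintro ⟨b, b'⟩ ⟨hb, hb', hsum⟩
      refine ⟨b, hBp hb, ?_⟩
      have hsum' : b + b' = n := hsum
      simp only [Prod.mk.injEq]
      exact ⟨trivial, by omega⟩
    calc P.ncard ≤ ((fun b : ℤ => (b, n - b)) '' ↑BpF).ncard :=
          Set.ncard_le_ncard hsub ((BpF.finite_toSet).image _)
      _ ≤ (↑BpF : Set ℤ).ncard := Set.ncard_image_le (BpF.finite_toSet)
      _ = BpF.card := Set.ncard_coe_finset _
      _ ≤ (M ×ˢ Finset.range p).card := Finset.card_image_le
      _ = 3 * p := by simp [hM]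
      _ ≤ 18 := by omega
  · set M : Finset ℤ := ({3, 4, 6} : Finset ℤ) with hM
    set G : Finset (ℤ × ℕ) := (M ×ˢ Finset.range p).filter
      (fun q => n - fB p q.1 q.2 ∈ Bp p) with hG
    set F : Finset (ℤ × ℤ) := G.image (fun q => (fB p q.1 q.2, n - fB p q.1 q.2)) with hF
    have hsub : P ⊆ ↑F := by
      rintro ⟨b, b'⟩ ⟨hb, hb', hsum⟩
      rw [Bp_mem_iff] at hb
      obtain ⟨m, hm, x, hx, rfl⟩ := hb
      have hsum' : fB p m x + b' = n := hsum
      have hb'eq : b' = n - fB p m x := by omega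
      simp only [hF, Finset.coe_image, Set.mem_image, Finset.mem_coe, hG, Finset.mem_filter,
        Finset.mem_product, Finset.mem_range]
      refine ⟨(m, x), ⟨⟨by simp [hM]; tauto, hx⟩, ?_⟩, ?_⟩
      · rw [← hb'eq]; exact hb'
      · simp [← hb'eq]
    have hGsub : G ⊆
        (({3} : Finset ℤ) ×ˢ ((Finset.range p).filter (fun x => n - fB p 3 x ∈ Bp p))) ∪
        (({4} : Finset ℤ) ×ˢ ((Finset.range p).filter (fun x => n - fB p 4 x ∈ Bp p))) ∪
        (({6} : Finset ℤ) ×ˢ ((Finset.range p).filter (fun x => n - fB p 6 x ∈ Bp p))) := by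
      rintro ⟨m, x⟩ hq
      simp only [hG, Finset.mem_filter, Finset.mem_product, Finset.mem_range] at hq
      obtain ⟨⟨hmM, hxp⟩, hcond⟩ := hq
      have hm : m = 3 ∨ m = 4 ∨ m = 6 := by simpa [hM] using hmM
      simp only [Finset.mem_union, Finset.mem_product, Finset.mem_singleton, Finset.mem_filter,
        Finset.mem_range]
      rcases hm with rfl | rfl | rfl
      · exact Or.inl (Or.inl ⟨rfl, hxp, hcond⟩)
      · exact Or.inl (Or.inr ⟨rfl, hxp, hcond⟩)
      · exact Or.inr ⟨rfl, hxp, hcond⟩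
    have hGcard : G.card ≤ 18 := by
      have h1 := keyC p hp hp11 3 (Or.inl rfl) n
      have h2 := keyC p hp hp11 4 (Or.inr (Or.inl rfl)) n
      have h3 := keyC p hp hp11 6 (Or.inr (Or.inr rfl)) n
      have hc := Finset.card_le_card hGsub
      have hu1 := Finset.card_union_le
        ((({3} : Finset ℤ) ×ˢ ((Finset.range p).filter (fun x => n - fB p 3 x ∈ Bp p))) ∪
         (({4} : Finset ℤ) ×ˢ ((Finset.range p).filter (fun x => n - fB p 4 x ∈ Bp p))))
        (({6} : Finset ℤ) ×ˢ ((Finset.range p).filter (fun x => n - fB p 6 x ∈ Bp p)))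
      have hu2 := Finset.card_union_le
        (({3} : Finset ℤ) ×ˢ ((Finset.range p).filter (fun x => n - fB p 3 x ∈ Bp p)))
        (({4} : Finset ℤ) ×ˢ ((Finset.range p).filter (fun x => n - fB p 4 x ∈ Bp p)))
      simp only [Finset.card_product, Finset.card_singleton, one_mul] at hu1 hu2 hc
      omega
    calc P.ncard ≤ (↑F : Set (ℤ × ℤ)).ncard := Set.ncard_le_ncard hsub (F.finite_toSet)
      _ = F.card := Set.ncard_coe_finset _
      _ ≤ G.card := Finset.card_image_le
      _ ≤ 18 := hGcard
end

section
/- Let p be a prime with p ≡ 3 or 5 (mod 8). Then there exists a set A_p ⊆ ℤ/p²ℤ such that for every r ∈ ℤ/p²ℤ, the number of ordered pairs (a,a') ∈ A_p² with a + a' = r is at least 1 and at most 594. -/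
noncomputable section Stmt6Aux

variable {p : ℕ} [Fact p.Prime]

/-- lift from `ZMod p` to `ZMod (p^2)` via `val`. -/
def Lft (p : ℕ) (z : ZMod p) : ZMod (p ^ 2) := (z.val : ZMod (p ^ 2))

lemma ppzero : ((p : ZMod (p ^ 2)) * p = 0) := by
  have h : ((p ^ 2 : ℕ) : ZMod (p ^ 2)) = 0 := ZMod.natCast_self _
  push_cast at h
  linear_combination h

lemma Lft_add (z z' : ZMod p) :
    Lft p z + Lft p z' = Lft p (z + z') ∨
      Lft p z + Lft p z' = Lft p (z + z') + p := by
  have hz := z.val_lt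
  have hz' := z'.val_lt
  have hadd : (z + z').val = (z.val + z'.val) % p := ZMod.val_add z z'
  by_cases h : z.val + z'.val < p
  · left
    rw [Nat.mod_eq_of_lt h] at hadd
    simp only [Lft, hadd]
    push_cast; ring
  · right
    push_neg at h
    have h2 : z.val + z'.val - p < p := by omega
    have : (z + z').val = z.val + z'.val - p := by
      rw [hadd, Nat.mod_eq_sub_mod h]; exact Nat.mod_eq_of_lt h2
    have hsum : z.val + z'.val = (z + z').val + p := by omega
    simp only [Lft]
    rw [← Nat.cast_add, hsum]
    push_cast; ring

lemma pLft_add (z z' : ZMod p) :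
    (p : ZMod (p ^ 2)) * Lft p z + (p : ZMod (p ^ 2)) * Lft p z' = (p : ZMod (p ^ 2)) * Lft p (z + z') := by
  rcases Lft_add z z' with h | h
  · rw [← mul_add, h]
  · rw [← mul_add, h, mul_add, ppzero, add_zero]

lemma Lft_one (h1 : 1 < p) : Lft p 1 = 1 := by
  haveI : Fact (1 < p) := ⟨h1⟩
  simp [Lft, ZMod.val_one]

lemma pLft_inj {z z' : ZMod p} (h : (p : ZMod (p ^ 2)) * Lft p z = (p : ZMod (p ^ 2)) * Lft p z') : z = z' := by
  have hz := z.val_lt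
  have hz' := z'.val_lt
  have e1 : ((p * z.val : ℕ) : ZMod (p ^ 2)) = ((p * z'.val : ℕ) : ZMod (p ^ 2)) := by
    push_cast; simpa [Lft] using h
  have hlt : ∀ w : ZMod p, p * w.val < p ^ 2 := by
    intro w
    have := w.val_lt
    have hp : 0 < p := (Fact.out : p.Prime).pos
    calc p * w.val < p * p := by exact (Nat.mul_lt_mul_left hp).mpr this
    _ = p ^ 2 := (sq p).symm
  have e2 : p * z.val = p * z'.val := by
    have := congrArg ZMod.val e1
    rwa [ZMod.val_cast_of_lt (hlt z), ZMod.val_cast_of_lt (hlt z')] at this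
  have : z.val = z'.val := Nat.eq_of_mul_eq_mul_left (Fact.out : p.Prime).pos e2
  exact ZMod.val_injective p this

/-- projection -/
def Prj (p : ℕ) : ZMod (p ^ 2) →+* ZMod p := ZMod.castHom (dvd_pow_self p two_ne_zero) (ZMod p)

lemma Prj_Lft (z : ZMod p) : Prj p (Lft p z) = z := by
  simp [Prj, Lft, ZMod.natCast_rightInverse z]

lemma Prj_p : Prj p ((p : ℕ) : ZMod (p ^ 2)) = 0 := by
  rw [map_natCast]
  exact ZMod.natCast_self p

lemma exists_decomp (r : ZMod (p ^ 2)) : ∃ u v : ZMod p, r = Lft p u + (p : ZMod (p ^ 2)) * Lft p v := by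
  haveI : NeZero (p ^ 2) := ⟨pow_ne_zero 2 (Fact.out : p.Prime).ne_zero⟩
  have hp : 0 < p := (Fact.out : p.Prime).pos
  have hr := r.val_lt
  refine ⟨((r.val % p : ℕ) : ZMod p), ((r.val / p : ℕ) : ZMod p), ?_⟩
  have h1 : r.val % p < p := Nat.mod_lt _ hp
  have h2 : r.val / p < p := by
    have : r.val < p * p := by rwa [← sq]
    exact Nat.div_lt_of_lt_mul this
  simp only [Lft, ZMod.val_cast_of_lt h1, ZMod.val_cast_of_lt h2]
  have : ((r.val % p + p * (r.val / p) : ℕ) : ZMod (p ^ 2)) = (r.val : ZMod (p ^ 2)) := by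
    congr 1
    exact Nat.mod_add_div r.val p
  push_cast at this
  rw [this, ZMod.natCast_rightInverse r]

end Stmt6Aux

section Quad

lemma quad_roots {F : Type*} [Field F] (α β γ : F) (hα : α ≠ 0) :
    ∃ z : F × F, ∀ i : F, α * i ^ 2 + β * i + γ = 0 → i = z.1 ∨ i = z.2 := by
  by_cases h : ∃ i₀ : F, α * i₀ ^ 2 + β * i₀ + γ = 0
  · obtain ⟨i₀, h₀⟩ := h
    refine ⟨(i₀, -β / α - i₀), fun i hi => ?_⟩
    by_cases hii : i = i₀
    · exact Or.inl hii
    · right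
      have hne : i - i₀ ≠ 0 := sub_ne_zero.mpr hii
      have key : (i - i₀) * (α * (i + i₀) + β) = 0 := by linear_combination hi - h₀
      have h2 : α * (i + i₀) + β = 0 := by
        rcases mul_eq_zero.mp key with h' | h'
        · exact absurd h' hne
        · exact h'
      field_simp
      linear_combination h2
  · push_neg at h
    exact ⟨(0, 0), fun i hi => absurd hi (h i).elim⟩

lemma sq_of_nonsq_mul {F : Type*} [Field F] [Fintype F] [DecidableEq F] {a b : F}
    (ha : ¬IsSquare a) (hb : ¬IsSquare b) : IsSquare (a * b) := by
  have ha0 : a ≠ 0 := fun h => ha (h ▸ ⟨0, by ring⟩)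
  have hb0 : b ≠ 0 := fun h => hb (h ▸ ⟨0, by ring⟩)
  have h1 : quadraticChar F a = -1 := quadraticChar_neg_one_iff_not_isSquare.mpr ha
  have h2 : quadraticChar F b = -1 := quadraticChar_neg_one_iff_not_isSquare.mpr hb
  have : quadraticChar F (a * b) = 1 := by rw [map_mul, h1, h2]; ring
  exact (quadraticChar_one_iff_isSquare (mul_ne_zero ha0 hb0)).mp this

end Quad

theorem stmt6 (p : ℕ) (hp : p.Prime) (h8 : p % 8 = 3 ∨ p % 8 = 5) :
    ∃ A : Set (ZMod (p ^ 2)), ∀ r : ZMod (p ^ 2),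
      1 ≤ ({q : ZMod (p ^ 2) × ZMod (p ^ 2) | q.1 ∈ A ∧ q.2 ∈ A ∧ q.1 + q.2 = r}).ncard ∧
      ({q : ZMod (p ^ 2) × ZMod (p ^ 2) | q.1 ∈ A ∧ q.2 ∈ A ∧ q.1 + q.2 = r}).ncard ≤ 594 := by
  classical
  haveI : Fact p.Prime := ⟨hp⟩
  haveI : NeZero (p ^ 2) := ⟨pow_ne_zero 2 hp.ne_zero⟩
  by_cases hp24 : p ≤ 24
  · -- small case: A = univ
    refine ⟨Set.univ, fun r => ?_⟩
    constructor
    · exact (Set.ncard_pos (Set.toFinite _)).mpr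
        ⟨(0, r), Set.mem_univ _, Set.mem_univ _, zero_add r⟩
    · have hsub : {q : ZMod (p ^ 2) × ZMod (p ^ 2) | q.1 ∈ Set.univ ∧ q.2 ∈ Set.univ ∧ q.1 + q.2 = r}
          ⊆ Set.range (fun x : ZMod (p ^ 2) => (x, r - x)) := by
        rintro ⟨x, y⟩ ⟨-, -, hxy⟩
        refine ⟨x, Prod.ext rfl ?_⟩
        dsimp only
        dsimp only at hxy
        linear_combination -hxy
      calc _ ≤ (Set.range (fun x : ZMod (p ^ 2) => (x, r - x))).ncard :=
            Set.ncard_le_ncard hsub (Set.toFinite _)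
        _ ≤ (Set.univ : Set (ZMod (p ^ 2))).ncard := by
            rw [← Set.image_univ]; exact Set.ncard_image_le (Set.toFinite _)
        _ = p ^ 2 := by rw [Set.ncard_univ, Nat.card_eq_fintype_card, ZMod.card]
        _ ≤ 594 := by nlinarith
  · -- main construction
    push_neg at hp24
    have hnum : ∀ n : ℕ, 0 < n → n < 25 → (n : ZMod p) ≠ 0 := by
      intro n hn1 hn2 h
      rw [ZMod.natCast_eq_zero_iff] at h
      have := Nat.le_of_dvd hn1 h
      omega
    have h2 : (2 : ZMod p) ≠ 0 := by exact_mod_cast hnum 2 (by norm_num) (by norm_num)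
    have h3 : (3 : ZMod p) ≠ 0 := by exact_mod_cast hnum 3 (by norm_num) (by norm_num)
    have h8ne : (8 : ZMod p) ≠ 0 := by exact_mod_cast hnum 8 (by norm_num) (by norm_num)
    have hns2 : ¬IsSquare (2 : ZMod p) := by
      rw [ZMod.exists_sq_eq_two_iff (by omega : p ≠ 2)]
      omega
    set M : Fin 3 → ZMod p := ![4, 6, 3] with hMdef
    set C : Fin 2 → ZMod p := ![0, 1] with hCdef
    have hM : ∀ k k' : Fin 3, M k + M k' ≠ 0 := by
      intro k k'
      fin_cases k <;> fin_cases k' <;> simp only [hMdef, Matrix.cons_val_zero, Matrix.cons_val_one,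
        Matrix.head_cons, Fin.mk_zero, Fin.mk_one, Fin.reduceFinMk, Matrix.cons_val_two,
        Matrix.tail_cons] <;> intro h
      · exact hnum 8 (by norm_num) (by norm_num) (by push_cast; linear_combination h)
      · exact hnum 10 (by norm_num) (by norm_num) (by push_cast; linear_combination h)
      · exact hnum 7 (by norm_num) (by norm_num) (by push_cast; linear_combination h)
      · exact hnum 10 (by norm_num) (by norm_num) (by push_cast; linear_combination h)
      · exact hnum 12 (by norm_num) (by norm_num) (by push_cast; linear_combination h)
      · exact hnum 9 (by norm_num) (by norm_num) (by push_cast; linear_combination h)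
      · exact hnum 7 (by norm_num) (by norm_num) (by push_cast; linear_combination h)
      · exact hnum 9 (by norm_num) (by norm_num) (by push_cast; linear_combination h)
      · exact hnum 6 (by norm_num) (by norm_num) (by push_cast; linear_combination h)
    have hM0 : M 0 = 4 := rfl
    have hM1 : M 1 = 6 := rfl
    have hM2 : M 2 = 3 := rfl
    have hC0 : C 0 = 0 := rfl
    have hC1 : C 1 = 1 := rfl
    set f : Fin 3 → Fin 2 → ZMod p → ZMod (p ^ 2) := fun k c i =>
      Lft p i + (p : ZMod (p ^ 2)) * Lft p (M k * i ^ 2 + C c) with hf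
    refine ⟨{x | ∃ k c i, x = f k c i}, fun r => ?_⟩
    obtain ⟨u, v, hr⟩ := exists_decomp (p := p) r
    have hcarry : ∀ i j : ZMod p, i + j = u → ∃ d : ZMod p, (d = 0 ∨ d = 1) ∧
        ∀ (k₁ k₂ : Fin 3) (c₁ c₂ : Fin 2),
          (f k₁ c₁ i + f k₂ c₂ j = r ↔
            (M k₁ * i ^ 2 + C c₁) + (M k₂ * j ^ 2 + C c₂) + d = v) := by
      intro i j hij
      rcases Lft_add (p := p) i j with hL | hL
      · rw [hij] at hL
        refine ⟨0, Or.inl rfl, fun k₁ k₂ c₁ c₂ => ?_⟩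
        have e1 : f k₁ c₁ i + f k₂ c₂ j
            = Lft p u + (p : ZMod (p ^ 2)) *
              Lft p ((M k₁ * i ^ 2 + C c₁) + (M k₂ * j ^ 2 + C c₂)) := by
          simp only [hf]
          have hA := pLft_add (p := p) (M k₁ * i ^ 2 + C c₁) (M k₂ * j ^ 2 + C c₂)
          linear_combination hL + hA
        rw [e1, hr]
        constructor
        · intro h
          have h' := pLft_inj (add_left_cancel h)
          linear_combination h'
        · intro h
          have h' : (M k₁ * i ^ 2 + C c₁) + (M k₂ * j ^ 2 + C c₂) = v := by linear_combination h
          rw [h']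
      · rw [hij] at hL
        refine ⟨1, Or.inr rfl, fun k₁ k₂ c₁ c₂ => ?_⟩
        have e1 : f k₁ c₁ i + f k₂ c₂ j
            = Lft p u + (p : ZMod (p ^ 2)) *
              Lft p ((M k₁ * i ^ 2 + C c₁) + (M k₂ * j ^ 2 + C c₂) + 1) := by
          simp only [hf]
          have hA := pLft_add (p := p) (M k₁ * i ^ 2 + C c₁) (M k₂ * j ^ 2 + C c₂)
          have hB := pLft_add (p := p) ((M k₁ * i ^ 2 + C c₁) + (M k₂ * j ^ 2 + C c₂)) 1
          have hone : Lft p (1 : ZMod p) = 1 := Lft_one hp.one_lt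
          linear_combination hL + hA + hB - (p : ZMod (p ^ 2)) * hone
        rw [e1, hr]
        constructor
        · intro h
          have h' := pLft_inj (add_left_cancel h)
          linear_combination h'
        · intro h
          have h' : (M k₁ * i ^ 2 + C c₁) + (M k₂ * j ^ 2 + C c₂) + 1 = v := by linear_combination h
          rw [h']
    constructor
    · -- coverage
      have hcover : ∃ (k₁ k₂ : Fin 3) (i : ZMod p),
          M k₁ * i ^ 2 + M k₂ * (u - i) ^ 2 = v - 1 := by
        by_cases hsq : IsSquare ((v - 1 - 2 * u ^ 2) / 8)
        · obtain ⟨y, hy⟩ := hsq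
          rw [div_eq_iff h8ne] at hy
          refine ⟨0, 0, u / 2 + y, ?_⟩
          rw [hM0]
          field_simp [h2]
          linear_combination (-4 : ZMod p) * hy
        · have hinv : (2 : ZMod p) * 2⁻¹ = 1 := mul_inv_cancel₀ h2
          have hx2 : ¬IsSquare ((v - 1 - 2 * u ^ 2) / 2) := by
            rintro ⟨z, hz⟩
            refine hsq ⟨z / 2, ?_⟩
            rw [div_eq_iff h8ne]
            linear_combination 2 * hz +
              (-(v - 1 - 2 * u ^ 2) - 2 * z ^ 2 * (1 + 2 * (2 : ZMod p)⁻¹)) * hinv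
          have hxsq : IsSquare (v - 1 - 2 * u ^ 2) := by
            have hh := sq_of_nonsq_mul hns2 hx2
            rwa [show (2 : ZMod p) * ((v - 1 - 2 * u ^ 2) / 2) = v - 1 - 2 * u ^ 2 by
              field_simp [h2]] at hh
          obtain ⟨w, hw⟩ := hxsq
          refine ⟨1, 2, u / 3 + w / 3, ?_⟩
          rw [hM1, hM2]
          field_simp [h3]
          linear_combination (-9 : ZMod p) * hw
      obtain ⟨k₁, k₂, i, hqe⟩ := hcover
      obtain ⟨d, hd01, hiff⟩ := hcarry i (u - i) (by ring)
      have hmem1 : f k₁ 0 i ∈ {x | ∃ k c i, x = f k c i} := ⟨k₁, 0, i, rfl⟩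
      rcases hd01 with rfl | rfl
      · have hXY := (hiff k₁ k₂ 0 1).mpr (by rw [hC0, hC1]; linear_combination hqe)
        exact (Set.ncard_pos (Set.toFinite _)).mpr
          ⟨(f k₁ 0 i, f k₂ 1 (u - i)), hmem1, ⟨k₂, 1, u - i, rfl⟩, hXY⟩
      · have hXY := (hiff k₁ k₂ 0 0).mpr (by rw [hC0]; linear_combination hqe)
        exact (Set.ncard_pos (Set.toFinite _)).mpr
          ⟨(f k₁ 0 i, f k₂ 0 (u - i)), hmem1, ⟨k₂, 0, u - i, rfl⟩, hXY⟩
    · -- upper bound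
      have hZex : ∀ (k₁ k₂ : Fin 3) (E : ZMod p), ∃ z : ZMod p × ZMod p,
          ∀ i : ZMod p, M k₁ * i ^ 2 + M k₂ * (u - i) ^ 2 + E = v → i = z.1 ∨ i = z.2 := by
        intro k₁ k₂ E
        obtain ⟨z, hz⟩ := quad_roots (M k₁ + M k₂) (-(2 * M k₂ * u)) (M k₂ * u ^ 2 + E - v)
          (hM k₁ k₂)
        exact ⟨z, fun i hi => hz i (by linear_combination hi)⟩
      choose Z hZ using hZex
      set g : Fin 3 × Fin 3 × Fin 4 × Fin 2 × Bool → ZMod (p ^ 2) := fun t =>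
        f t.1 t.2.2.2.1 (cond t.2.2.2.2 (Z t.1 t.2.1 ((t.2.2.1 : ℕ) : ZMod p)).1
          (Z t.1 t.2.1 ((t.2.2.1 : ℕ) : ZMod p)).2) with hg
      have hsub : {q : ZMod (p ^ 2) × ZMod (p ^ 2) |
            q.1 ∈ {x | ∃ k c i, x = f k c i} ∧ q.2 ∈ {x | ∃ k c i, x = f k c i} ∧ q.1 + q.2 = r}
          ⊆ Set.range (fun t => (g t, r - g t)) := by
        rintro ⟨X, Y⟩ ⟨hX, hY, hXYr⟩
        obtain ⟨k₁, c₁, i, rfl⟩ := hX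
        obtain ⟨k₂, c₂, j, rfl⟩ := hY
        dsimp only at hXYr ⊢
        have hij : i + j = u := by
          have h1 := congrArg (Prj p) hXYr
          rw [hr] at h1
          simp only [hf, map_add, map_mul, Prj_Lft, Prj_p, zero_mul, add_zero] at h1
          exact h1
        obtain ⟨d, hd01, hiff⟩ := hcarry i j hij
        have heq := (hiff k₁ k₂ c₁ c₂).mp hXYr
        have hj : j = u - i := by linear_combination hij
        have he : ∃ e : Fin 4, ((e : ℕ) : ZMod p) = C c₁ + C c₂ + d := by
          rcases hd01 with rfl | rfl <;> fin_cases c₁ <;> fin_cases c₂ <;>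
            simp only [hCdef, Matrix.cons_val_zero, Matrix.cons_val_one, Matrix.head_cons,
              Fin.mk_zero, Fin.mk_one]
          · exact ⟨⟨0, by norm_num⟩, by norm_num⟩
          · exact ⟨⟨1, by norm_num⟩, by norm_num⟩
          · exact ⟨⟨1, by norm_num⟩, by norm_num⟩
          · exact ⟨⟨2, by norm_num⟩, by norm_num⟩
          · exact ⟨⟨1, by norm_num⟩, by norm_num⟩
          · exact ⟨⟨2, by norm_num⟩, by norm_num⟩
          · exact ⟨⟨2, by norm_num⟩, by norm_num⟩
          · exact ⟨⟨3, by norm_num⟩, by norm_num⟩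
        obtain ⟨e, he⟩ := he
        have hroot := hZ k₁ k₂ ((e : ℕ) : ZMod p) i
          (by rw [he, ← hj]; linear_combination heq)
        rcases hroot with h1 | h1
        · refine ⟨(k₁, k₂, e, c₁, true), ?_⟩
          simp only [hg, Bool.cond_true]
          rw [← h1]
          refine Prod.ext rfl ?_
          dsimp only
          linear_combination -hXYr
        · refine ⟨(k₁, k₂, e, c₁, false), ?_⟩
          simp only [hg, Bool.cond_false]
          rw [← h1]
          refine Prod.ext rfl ?_
          dsimp only
          linear_combination -hXYr
      calc _ ≤ (Set.range (fun t => ((g t : ZMod (p ^ 2)), r - g t))).ncard :=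
            Set.ncard_le_ncard hsub (Set.toFinite _)
        _ ≤ (Set.univ : Set (Fin 3 × Fin 3 × Fin 4 × Fin 2 × Bool)).ncard := by
            rw [← Set.image_univ]; exact Set.ncard_image_le (Set.toFinite _)
        _ = 144 := by
            rw [Set.ncard_univ]
            simp [Nat.card_eq_fintype_card]
        _ ≤ 594 := by norm_num
end

section
/- Let b = (b_1, b_2, ...) with b_i ≥ 2, and for each i let A_i ⊆ {0,...,b_i−1} be such that, viewed in ℤ/b_iℤ, A_i + A_i = ℤ/b_iℤ. Define A ⊆ ℕ as the set of numbers whose generalized base-b expansion a_k ... a_1 satisfies a_j ∈ A_j for all j < k (the top digit a_k unrestricted). Then A + A = ℕ. -/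
/-- Value of a digit list in the generalized base `b` (digit `i` has weight `∏_{j<i} b j`). -/
def gval (b : ℕ → ℕ) (a : List ℕ) : ℕ :=
  ∑ i ∈ Finset.range a.length, a.getD i 0 * ∏ j ∈ Finset.range i, b j

/-- The set of naturals whose generalized base-`b` digits below the top position lie in the
prescribed sets `Ai`, with the top digit unrestricted. -/
def digitSet (b : ℕ → ℕ) (Ai : ℕ → Set ℕ) : Set ℕ :=
  {x | ∃ a : List ℕ, (∀ i < a.length, a.getD i 0 < b i) ∧ a.getLast? ≠ some 0 ∧
    (∀ j, j + 1 < a.length → a.getD j 0 ∈ Ai j) ∧ x = gval b a}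

lemma gval_cons (b : ℕ → ℕ) (a : ℕ) (L : List ℕ) :
    gval b (a :: L) = a + b 0 * gval (fun i => b (i + 1)) L := by
  unfold gval
  rw [List.length_cons, Finset.sum_range_succ']
  simp only [List.getD_cons_succ, List.getD_cons_zero, Finset.range_zero,
    Finset.prod_empty, mul_one]
  rw [add_comm, Finset.mul_sum]
  congr 1
  apply Finset.sum_congr rfl
  intro i _
  rw [Finset.prod_range_succ']
  ring

lemma small_mem (b : ℕ → ℕ) (Ai : ℕ → Set ℕ) (d : ℕ) (hd : d < b 0) :
    d ∈ digitSet b Ai := by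
  rcases Nat.eq_zero_or_pos d with rfl | hpos
  · exact ⟨[], by simp, by simp, by simp, by simp [gval]⟩
  · refine ⟨[d], ?_, by simp [hpos.ne'], by simp, by simp [gval]⟩
    intro i hi
    have : i = 0 := by simpa using hi
    subst this
    simpa using hd

lemma cons_mem (b : ℕ → ℕ) (Ai : ℕ → Set ℕ) (a : ℕ) (ha : a < b 0) (haA : a ∈ Ai 0)
    (x : ℕ) (hx : x ∈ digitSet (fun i => b (i + 1)) (fun i => Ai (i + 1))) :
    a + b 0 * x ∈ digitSet b Ai := by
  obtain ⟨L, h1, h2, h3, rfl⟩ := hx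
  cases L with
  | nil =>
    simp only [gval, List.length_nil, Finset.range_zero, Finset.sum_empty, mul_zero, add_zero]
    exact small_mem b Ai a ha
  | cons c T =>
    refine ⟨a :: c :: T, ?_, ?_, ?_, (gval_cons b a (c :: T)).symm⟩
    · intro i hi
      cases i with
      | zero => simpa using ha
      | succ j =>
        simp only [List.getD_cons_succ]
        exact h1 j (by simpa using Nat.lt_of_succ_lt_succ hi)
    · rwa [List.getLast?_cons_cons]
    · intro j hj
      cases j with
      | zero => simpa using haA
      | succ k =>
        simp only [List.getD_cons_succ]
        exact h3 k (by simpa using Nat.lt_of_succ_lt_succ hj)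

lemma main_aux : ∀ n : ℕ, ∀ (b : ℕ → ℕ), (∀ i, 2 ≤ b i) → ∀ Ai : ℕ → Set ℕ,
    (∀ i, Ai i ⊆ Set.Iio (b i)) →
    (∀ i, ∀ r : ZMod (b i), ∃ a ∈ Ai i, ∃ a' ∈ Ai i,
      (a : ZMod (b i)) + (a' : ZMod (b i)) = r) →
    ∃ x ∈ digitSet b Ai, ∃ y ∈ digitSet b Ai, x + y = n := by
  intro n
  induction n using Nat.strong_induction_on with
  | _ n IH =>
    intro b hb Ai hAi hcover
    by_cases hn : n < b 0
    · exact ⟨n, small_mem b Ai n hn, 0, small_mem b Ai 0 (by linarith [hb 0]), add_zero n⟩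
    · push_neg at hn
      obtain ⟨a, haA, a', haA', hsum⟩ := hcover 0 (n : ZMod (b 0))
      have ha : a < b 0 := hAi 0 haA
      have ha' : a' < b 0 := hAi 0 haA'
      have hmod : (a + a') % b 0 = n % b 0 := by
        have : ((a + a' : ℕ) : ZMod (b 0)) = ((n : ℕ) : ZMod (b 0)) := by
          push_cast; exact hsum
        exact (ZMod.natCast_eq_natCast_iff _ _ _).mp this
      have hle : a + a' ≤ n := by
        have h1 : a + a' < 2 * b 0 := by omega
        have h2 : n % b 0 + b 0 * (n / b 0) = n := Nat.mod_add_div n (b 0)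
        have h3 : 1 ≤ n / b 0 := (Nat.one_le_div_iff (by linarith [hb 0])).mpr hn
        have h4 : (a + a') % b 0 + b 0 * ((a + a') / b 0) = a + a' :=
          Nat.mod_add_div _ _
        have h5 : (a + a') / b 0 ≤ 1 := by
          by_contra h
          push_neg at h
          have := Nat.div_mul_le_self (a + a') (b 0)
          nlinarith [Nat.div_mul_le_self (a + a') (b 0)]
        nlinarith
      obtain ⟨m, hm⟩ : b 0 ∣ n - (a + a') :=
        (Nat.modEq_iff_dvd' hle).mp hmod
      have hmn : m < n := by
        have h2 : 2 * m ≤ b 0 * m := Nat.mul_le_mul_right m (hb 0)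
        have hb2 := hb 0
        omega
      obtain ⟨x', hx', y', hy', hxy⟩ :=
        IH m hmn (fun i => b (i + 1)) (fun i => hb (i + 1))
          (fun i => Ai (i + 1)) (fun i => hAi (i + 1)) (fun i => hcover (i + 1))
      refine ⟨a + b 0 * x', cons_mem b Ai a ha haA x' hx',
        a' + b 0 * y', cons_mem b Ai a' ha' haA' y' hy', ?_⟩
      have : b 0 * x' + b 0 * y' = b 0 * m := by rw [← Nat.mul_add, hxy]
      omega

theorem stmt8 (b : ℕ → ℕ) (hb : ∀ i, 2 ≤ b i) (Ai : ℕ → Set ℕ)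
    (hAi : ∀ i, Ai i ⊆ Set.Iio (b i))
    (hcover : ∀ i, ∀ r : ZMod (b i), ∃ a ∈ Ai i, ∃ a' ∈ Ai i,
      (a : ZMod (b i)) + (a' : ZMod (b i)) = r) :
    ∀ n : ℕ, ∃ x ∈ digitSet b Ai, ∃ y ∈ digitSet b Ai, x + y = n := by
  intro n
  exact main_aux n b hb Ai hAi hcover
end

section
/- There exists a set A ⊆ ℕ such that A + A = ℕ and for every ε > 0, σ_A(N)/N^ε → 0 as N → ∞. -/
/-!
Erdős's probabilistic construction. Put `n` into a random set independently with probability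
`p n ≍ √(log n / n)`. For each `N`, the number `T_N` of pairs `{a, N - a}` with `2 a < N` lying
in the set has generating function `E[x ^ T_N] = ∏ (1 + (x - 1) p a p (N - a))` and mean
`λ_N ≍ log N`. Taking `x = 0` gives `P(T_N = 0) ≤ exp (-λ_N) ≤ N⁻³` for large `N`, and `x = e`
gives `P(T_N ≥ 67 log N) ≤ N⁻³`, so a union bound produces, for every `m`, a finite set that is
good at every `N < m` beyond a fixed threshold; compactness of `{0,1}^ℕ` turns these into one
infinite set `A`. Then `σ_A(N) ≤ 2 T_N + 1 = O(log N)`, and adjoining the finitely many small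
numbers, which changes `σ` only by a bounded amount, makes `A + A` all of `ℕ`.
-/

open Filter Finset

section BernoulliSubset

variable {α ι : Type*} [DecidableEq α] (U : Finset α) (p : α → ℝ)

/-- The expectation of `f S` for a random `S ⊆ U` containing each `i ∈ U` independently with
probability `p i`. -/
noncomputable def bernoulliExpect (f : Finset α → ℝ) : ℝ :=
  ∑ s ∈ U.powerset, ((∏ i ∈ s, p i) * ∏ i ∈ U \ s, (1 - p i)) * f s

theorem bernoulliExpect_prod_ite (g h : α → ℝ) :
    bernoulliExpect U p (fun s => ∏ i ∈ U, if i ∈ s then g i else h i)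
      = ∏ i ∈ U, (p i * g i + (1 - p i) * h i) := by
  rw [prod_add, bernoulliExpect]
  refine sum_congr rfl fun s hs => ?_
  rw [prod_ite, filter_mem_eq_inter, inter_eq_right.2 (mem_powerset.1 hs), filter_not,
    filter_mem_eq_inter, inter_eq_right.2 (mem_powerset.1 hs), prod_mul_distrib,
    prod_mul_distrib]
  ring

theorem bernoulliExpect_const_mul (c : ℝ) (f : Finset α → ℝ) :
    bernoulliExpect U p (fun s => c * f s) = c * bernoulliExpect U p f := by
  simp only [bernoulliExpect, mul_sum]
  exact sum_congr rfl fun _ _ => by ring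

theorem bernoulliExpect_const (c : ℝ) : bernoulliExpect U p (fun _ => c) = c := by
  have h := bernoulliExpect_prod_ite U p 1 1
  simp only [Pi.one_apply, ite_self, prod_const_one, mul_one, add_sub_cancel] at h
  simpa [h] using bernoulliExpect_const_mul U p c fun _ => 1

theorem bernoulliExpect_indicator_subset {S : Finset α} (hS : S ⊆ U) :
    bernoulliExpect U p (fun s => if S ⊆ s then 1 else 0) = ∏ i ∈ S, p i := by
  have h := bernoulliExpect_prod_ite U p (fun _ => 1) (fun i => if i ∈ S then 0 else 1)
  have hind : ∀ s : Finset α, (∏ i ∈ U, if i ∈ s then 1 else if i ∈ S then 0 else 1)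
      = if S ⊆ s then (1 : ℝ) else 0 := by
    intro s
    have : ∀ i, (if i ∈ s then 1 else if i ∈ S then 0 else 1)
        = if i ∈ S → i ∈ s then (1 : ℝ) else 0 := by
      intro i
      by_cases h₁ : i ∈ s <;> by_cases h₂ : i ∈ S <;> simp [h₁, h₂]
    simp_rw [this, prod_boole]
    exact if_congr ⟨fun h i hi => h i (hS hi) hi, fun h i _ hi => h hi⟩ rfl rfl
  have hfac : ∀ i ∈ U, p i * 1 + (1 - p i) * (if i ∈ S then 0 else 1)
      = if i ∈ S then p i else 1 := by
    intro i _
    by_cases hi : i ∈ S <;> simp [hi]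
  simp_rw [hind] at h
  rw [h, prod_congr rfl hfac, prod_ite_mem, inter_eq_right.2 hS]

theorem bernoulliExpect_add (f g : Finset α → ℝ) :
    bernoulliExpect U p (fun s => f s + g s) = bernoulliExpect U p f + bernoulliExpect U p g := by
  simp only [bernoulliExpect, mul_add, sum_add_distrib]

theorem bernoulliExpect_sum (t : Finset ι) (f : ι → Finset α → ℝ) :
    bernoulliExpect U p (fun s => ∑ j ∈ t, f j s) = ∑ j ∈ t, bernoulliExpect U p (f j) := by
  simp only [bernoulliExpect, mul_sum]
  exact sum_comm

theorem exists_le_bernoulliExpect (hp₀ : ∀ i ∈ U, 0 ≤ p i) (hp₁ : ∀ i ∈ U, p i ≤ 1)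
    (f : Finset α → ℝ) : ∃ s ⊆ U, f s ≤ bernoulliExpect U p f := by
  set w : Finset α → ℝ := fun s => (∏ i ∈ s, p i) * ∏ i ∈ U \ s, (1 - p i)
  have hw₀ : ∀ s ∈ U.powerset, 0 ≤ w s := fun s hs =>
    mul_nonneg (prod_nonneg fun i hi => hp₀ i (mem_powerset.1 hs hi))
      (prod_nonneg fun i hi => sub_nonneg.2 (hp₁ i (mem_sdiff.1 hi).1))
  have hw₁ : ∑ s ∈ U.powerset, w s = 1 := by
    simpa [bernoulliExpect] using bernoulliExpect_const U p 1
  by_contra! hlt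
  obtain ⟨s, hs, hws⟩ : ∃ s ∈ U.powerset, 0 < w s :=
    exists_lt_of_sum_lt (by simp [hw₁] : ∑ s ∈ U.powerset, (0 : ℝ) < _)
  have : ∑ s ∈ U.powerset, w s * bernoulliExpect U p f < ∑ s ∈ U.powerset, w s * f s :=
    sum_lt_sum (fun t ht => mul_le_mul_of_nonneg_left (hlt t (mem_powerset.1 ht)).le (hw₀ t ht))
      ⟨s, hs, mul_lt_mul_of_pos_left (hlt s (mem_powerset.1 hs)) hws⟩
  rw [← sum_mul, hw₁, one_mul] at this
  exact this.false

theorem bernoulliExpect_pow_card_filter_pairs (K : Finset ι) {u v : ι → α}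
    (hu : K.image u ⊆ U) (hv : K.image v ⊆ U) (hu_inj : Set.InjOn u K)
    (hv_inj : Set.InjOn v K) (huv : Disjoint (K.image u) (K.image v)) (x : ℝ) :
    bernoulliExpect U p (fun s => x ^ #{a ∈ K | u a ∈ s ∧ v a ∈ s})
      = ∏ a ∈ K, (1 + (x - 1) * (p (u a) * p (v a))) := by
  have hexpand : ∀ s : Finset α, x ^ #{a ∈ K | u a ∈ s ∧ v a ∈ s}
      = ∑ t ∈ K.powerset, (x - 1) ^ #t * (if t.image u ∪ t.image v ⊆ s then 1 else 0) := by
    intro s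
    have hfac : ∀ a, (if u a ∈ s ∧ v a ∈ s then x else 1)
        = 1 + (x - 1) * (if u a ∈ s ∧ v a ∈ s then 1 else 0) := by
      intro a; split_ifs <;> ring
    rw [← prod_const, prod_filter]
    simp_rw [hfac, prod_one_add, prod_mul_distrib, prod_const, prod_boole]
    refine sum_congr rfl fun t _ => ?_
    simp only [union_subset_iff, image_subset_iff, ← forall_and]
  have hpairs : ∀ t ⊆ K,
      ∏ i ∈ t.image u ∪ t.image v, p i = ∏ a ∈ t, p (u a) * p (v a) := by
    intro t ht
    rw [prod_union (huv.mono (image_subset_image ht) (image_subset_image ht)),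
      prod_image fun a ha b hb => hu_inj (ht ha) (ht hb),
      prod_image fun a ha b hb => hv_inj (ht ha) (ht hb), prod_mul_distrib]
  simp_rw [hexpand, bernoulliExpect_sum, bernoulliExpect_const_mul, prod_one_add]
  refine sum_congr rfl fun t ht => ?_
  have ht : t ⊆ K := mem_powerset.1 ht
  rw [bernoulliExpect_indicator_subset U p (union_subset ((image_subset_image ht).trans hu)
    ((image_subset_image ht).trans hv)), hpairs t ht]
  simp only [prod_mul_distrib, prod_const]

end BernoulliSubset


theorem sum_range_inv_sqrt_le (n : ℕ) :
    ∑ a ∈ range n, 1 / √((a : ℝ) + 1) ≤ 2 * √(n : ℝ) := by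
  induction n with
  | zero => simp
  | succ n ih =>
    rw [sum_range_succ]
    push_cast
    have hn : 0 < √((n : ℝ) + 1) := Real.sqrt_pos.2 (by positivity)
    have hsq := Real.mul_self_sqrt (show (0 : ℝ) ≤ n + 1 by positivity)
    have hsq' := Real.mul_self_sqrt (Nat.cast_nonneg (α := ℝ) n)
    have hle : √(n : ℝ) ≤ √((n : ℝ) + 1) := Real.sqrt_le_sqrt (by linarith)
    have : 1 / √((n : ℝ) + 1) ≤ 2 * √((n : ℝ) + 1) - 2 * √(n : ℝ) := by
      rw [div_le_iff₀ hn]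
      nlinarith [Real.sqrt_nonneg (n : ℝ)]
    linarith

theorem Real.prod_one_add_le_exp_sum_of_neg_one_le {ι : Type*} (s : Finset ι) {f : ι → ℝ}
    (hf : ∀ i ∈ s, -1 ≤ f i) : ∏ i ∈ s, (1 + f i) ≤ Real.exp (∑ i ∈ s, f i) := by
  rw [Real.exp_sum]
  exact prod_le_prod (fun i hi => by linarith [hf i hi])
    fun i _ => (add_comm 1 (f i)).le.trans (Real.add_one_le_exp _)

theorem exists_set_forall_of_forall_lt {P : ℕ → Set ℕ → Prop}
    (hP : ∀ N A B, (∀ n ≤ N, n ∈ A ↔ n ∈ B) → P N A → P N B)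
    (h : ∀ m, ∃ A, ∀ N < m, P N A) : ∃ A, ∀ N, P N A := by
  classical
  set K : ℕ → Set (ℕ → Bool) := fun m => {σ | ∀ N < m, P N {n | σ n = true}}
  have hK : ∀ m, IsClosed (K m) := by
    intro m
    set r : (ℕ → Bool) → (Fin m → Bool) := fun σ i => σ i
    have hKr : K m = r ⁻¹' (r '' K m) := by
      refine (Set.subset_preimage_image r _).antisymm ?_
      rintro σ ⟨τ, hτ, hτσ⟩ N hN
      refine hP N _ _ (fun n hn => ?_) (hτ N hN)
      simp [← congrFun hτσ ⟨n, by omega⟩, r]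
    rw [hKr]
    exact (isClosed_discrete _).preimage (continuous_pi fun i => continuous_apply _)
  have hK_nonempty : ∀ m, (K m).Nonempty := fun m => by
    obtain ⟨A, hA⟩ := h m
    exact ⟨fun n => decide (n ∈ A), fun N hN => hP N A _ (fun n _ => by simp) (hA N hN)⟩
  obtain ⟨σ, hσ⟩ := IsCompact.nonempty_iInter_of_sequence_nonempty_isCompact_isClosed K
    (fun m σ hσ N hN => hσ N (by omega)) hK_nonempty (hK 0).isCompact hK
  exact ⟨{n | σ n = true}, fun N => Set.mem_iInter.1 hσ (N + 1) N N.lt_succ_self⟩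

theorem tendsto_div_rpow_of_le_log {f : ℕ → ℝ} {C D ε : ℝ} (hε : 0 < ε)
    (hf₀ : ∀ N, 0 ≤ f N) (hf : ∀ᶠ N in atTop, f N ≤ C * Real.log (N + 3) + D) :
    Tendsto (fun N => f N / (N : ℝ) ^ ε) atTop (nhds 0) := by
  have hshift : Tendsto (fun N : ℕ => (N : ℝ) + 3) atTop atTop :=
    tendsto_atTop_add_const_right _ _ tendsto_natCast_atTop_atTop
  have hpow : (fun N : ℕ => ((N : ℝ) + 3) ^ ε) =O[atTop] fun N : ℕ => (N : ℝ) ^ ε := by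
    refine Asymptotics.IsBigO.of_bound (4 ^ ε) ?_
    filter_upwards [eventually_ge_atTop 1] with N hN
    have hN : (1 : ℝ) ≤ N := by exact_mod_cast hN
    rw [Real.norm_of_nonneg (by positivity), Real.norm_of_nonneg (by positivity),
      ← Real.mul_rpow (by norm_num) (by positivity)]
    exact Real.rpow_le_rpow (by positivity) (by linarith) hε.le
  have hlog : (fun N : ℕ => Real.log (N + 3)) =o[atTop] fun N : ℕ => (N : ℝ) ^ ε :=
    ((isLittleO_log_rpow_atTop hε).comp_tendsto hshift).trans_isBigO hpow
  have hone : (fun _ : ℕ => (1 : ℝ)) =o[atTop] fun N : ℕ => (N : ℝ) ^ ε :=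
    (Asymptotics.isLittleO_one_left_iff ℝ).2 <| (tendsto_rpow_atTop hε).comp
      tendsto_natCast_atTop_atTop |>.congr' <| Eventually.of_forall fun N => by
        simp [Real.norm_of_nonneg (Real.rpow_nonneg (Nat.cast_nonneg N) ε)]
  have hbound : f =O[atTop] fun N : ℕ => C * Real.log (N + 3) + D := by
    refine Asymptotics.IsBigO.of_bound 1 ?_
    filter_upwards [hf] with N hN
    rw [one_mul, Real.norm_of_nonneg (hf₀ N)]
    exact hN.trans (le_abs_self _)
  exact (hbound.trans_isLittleO ((hlog.const_mul_left C).add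
    (by simpa using hone.const_mul_left D))).tendsto_div_nhds_zero

theorem sum_range_two_div_cube_lt_one (m : ℕ) :
    ∑ N ∈ range m, 2 / ((N : ℝ) + 3) ^ 3 < 1 := by
  suffices h : ∑ N ∈ range m, 2 / ((N : ℝ) + 3) ^ 3 ≤ 1 / 2 - 1 / ((m : ℝ) + 2) by
    have : 0 < 1 / ((m : ℝ) + 2) := by positivity
    linarith
  induction m with
  | zero => norm_num
  | succ m ih =>
    rw [sum_range_succ]
    have hstep : 2 / ((m : ℝ) + 3) ^ 3 ≤ 1 / ((m : ℝ) + 2) - 1 / ((m : ℝ) + 3) := by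
      rw [div_sub_div _ _ (by positivity) (by positivity),
        div_le_div_iff₀ (by positivity) (by positivity)]
      nlinarith [mul_nonneg (show (0 : ℝ) ≤ m + 3 by positivity)
        (show (0 : ℝ) ≤ (m : ℝ) ^ 2 + 4 * m + 5 by positivity)]
    push_cast
    rw [show (m : ℝ) + 1 + 2 = m + 3 by ring]
    linarith

namespace ThinBasis

/-- The factor `4` makes `pairMean N ≥ (4 ^ 2 / 2) log N > 3 log N`, and the shift `3 > e` makes
`prob` antitone. -/
noncomputable def prob (n : ℕ) : ℝ := min 1 (4 * √(Real.log (n + 3) / (n + 3)))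

theorem prob_nonneg (n : ℕ) : 0 ≤ prob n := le_min zero_le_one (by positivity)

theorem prob_le_one (n : ℕ) : prob n ≤ 1 := min_le_left _ _

theorem prob_antitone : Antitone prob := by
  intro n m hnm
  have hthree : ∀ k : ℕ, (k : ℝ) + 3 ∈ Set.Ici (Real.exp 1) := fun k => by
    simp only [Set.mem_Ici]
    linarith [Real.exp_one_lt_d9, Nat.cast_nonneg (α := ℝ) k]
  refine min_le_min le_rfl (mul_le_mul_of_nonneg_left (Real.sqrt_le_sqrt ?_) (by norm_num))
  exact Real.log_div_self_antitoneOn (hthree n) (hthree m) (by gcongr)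

theorem prob_le_of_le {n N : ℕ} (h : n ≤ N) :
    prob n ≤ 4 * √(Real.log (N + 3)) / √((n : ℝ) + 1) := by
  calc prob n ≤ 4 * √(Real.log (n + 3) / (n + 3)) := min_le_right _ _
    _ ≤ 4 * √(Real.log (N + 3) / (n + 1)) := by
        gcongr
        · exact Real.log_nonneg (by linarith [Nat.cast_nonneg (α := ℝ) N])
        · linarith
    _ = 4 * √(Real.log (N + 3)) / √((n : ℝ) + 1) := by
        rw [Real.sqrt_div' _ (by positivity)]; ring

theorem prob_mul_self (N : ℕ) : prob N * prob N = min 1 (16 * (Real.log (N + 3) / (N + 3))) := by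
  have hq : 0 ≤ Real.log (N + 3) / (N + 3) :=
    div_nonneg (Real.log_nonneg (by linarith [Nat.cast_nonneg (α := ℝ) N])) (by positivity)
  have hsq : (4 * √(Real.log (N + 3) / (N + 3))) ^ 2 = 16 * (Real.log (N + 3) / (N + 3)) := by
    rw [mul_pow, Real.sq_sqrt hq]; norm_num
  rw [prob, ← hsq]
  rcases le_total 1 (4 * √(Real.log (N + 3) / (N + 3))) with h | h
  · rw [min_eq_left h, min_eq_left (by nlinarith)]; norm_num
  · rw [min_eq_right h,
      min_eq_right (by nlinarith [Real.sqrt_nonneg (Real.log (N + 3) / (N + 3))])]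
    ring

noncomputable def pairMean (N : ℕ) : ℝ := ∑ a ∈ range ((N + 1) / 2), prob a * prob (N - a)

theorem pairMean_le (N : ℕ) : pairMean N ≤ 32 * Real.log (N + 3) := by
  set h := (N + 1) / 2
  set L := Real.log (N + 3)
  have hL : 0 ≤ L := Real.log_nonneg (by linarith [Nat.cast_nonneg (α := ℝ) N])
  have hh : h ≤ N := by omega
  have hterm : ∀ a ∈ range h,
      prob a * prob (N - a) ≤ (prob h * (4 * √L)) * (1 / √((a : ℝ) + 1)) := by
    intro a ha
    have ha : a < h := mem_range.1 ha
    have hpa := prob_le_of_le (show a ≤ N by omega)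
    rw [mul_comm, mul_assoc, mul_one_div]
    exact mul_le_mul (prob_antitone (by omega)) hpa (prob_nonneg a) (prob_nonneg h)
  have hsqrt : √(h : ℝ) / √((h : ℝ) + 1) ≤ 1 :=
    div_le_one_of_le₀ (Real.sqrt_le_sqrt (by linarith)) (Real.sqrt_nonneg _)
  calc pairMean N ≤ (prob h * (4 * √L)) * ∑ a ∈ range h, 1 / √((a : ℝ) + 1) := by
        rw [mul_sum]; exact sum_le_sum hterm
    _ ≤ (4 * √L / √((h : ℝ) + 1) * (4 * √L)) * (2 * √(h : ℝ)) := by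
        gcongr
        · exact prob_le_of_le hh
        · exact sum_range_inv_sqrt_le h
    _ = 32 * (√L * √L) * (√(h : ℝ) / √((h : ℝ) + 1)) := by ring
    _ ≤ 32 * L := by
        rw [Real.mul_self_sqrt hL]
        nlinarith

theorem eventually_le_pairMean : ∀ᶠ N : ℕ in atTop, 3 * Real.log (N + 3) ≤ pairMean N := by
  have hlog : ∀ᶠ N : ℕ in atTop, Real.log (N + 3) ≤ (N + 3) / 12 := by
    have hshift : Tendsto (fun N : ℕ => (N : ℝ) + 3) atTop atTop :=
      tendsto_atTop_add_const_right _ _ tendsto_natCast_atTop_atTop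
    filter_upwards [hshift.eventually (Real.isLittleO_log_id_atTop.bound (c := 1 / 12)
      (by norm_num)), hshift.eventually_ge_atTop 0] with N hN hN0
    simp only [Real.norm_eq_abs, id, abs_of_nonneg hN0] at hN
    linarith [le_abs_self (Real.log (N + 3))]
  filter_upwards [hlog, eventually_ge_atTop 3] with N hN h3
  set h := (N + 1) / 2
  set L := Real.log (N + 3)
  have hL : 0 ≤ L := Real.log_nonneg (by linarith [Nat.cast_nonneg (α := ℝ) N])
  have hhN : (N : ℝ) ≤ 2 * h := by exact_mod_cast (show N ≤ 2 * h by omega)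
  have h3' : (3 : ℝ) ≤ N := by exact_mod_cast h3
  calc 3 * L ≤ h * min 1 (16 * (L / (N + 3))) := by
        rw [mul_min_of_nonneg _ _ (Nat.cast_nonneg h), mul_one]
        refine le_min (by linarith) ?_
        rw [mul_div_assoc', mul_div_assoc', le_div_iff₀ (by positivity)]
        nlinarith
    _ = ∑ a ∈ range h, prob N * prob N := by
        rw [sum_const, card_range, prob_mul_self, nsmul_eq_mul]
    _ ≤ pairMean N := sum_le_sum fun a ha =>
        mul_le_mul (prob_antitone (by have := mem_range.1 ha; omega)) (prob_antitone (by omega))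
          (prob_nonneg N) (prob_nonneg a)

open Classical in
noncomputable def pairCount (A : Set ℕ) (N : ℕ) : ℕ :=
  #{a ∈ range ((N + 1) / 2) | a ∈ A ∧ N - a ∈ A}

theorem bernoulliExpect_pow_pairCount {m N : ℕ} (hN : N < m) (x : ℝ) :
    bernoulliExpect (range m) prob (fun s => x ^ pairCount ↑s N)
      = ∏ a ∈ range ((N + 1) / 2), (1 + (x - 1) * (prob a * prob (N - a))) := by
  have hK : ∀ a ∈ range ((N + 1) / 2), 2 * a < N := fun a ha => by
    have := mem_range.1 ha; omega
  convert bernoulliExpect_pow_card_filter_pairs (range m) prob (range ((N + 1) / 2)) (u := id)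
    (v := (N - ·)) ?_ ?_ (Set.injOn_id _) ?_ ?_ x using 2
  · simp [pairCount]
  · rfl
  · intro i hi
    obtain ⟨a, ha, rfl⟩ := mem_image.1 hi
    have := hK a ha
    exact mem_range.2 (by simp only [id]; omega)
  · intro i hi
    obtain ⟨a, ha, rfl⟩ := mem_image.1 hi
    exact mem_range.2 (by omega)
  · intro a ha b hb hab
    have := hK a ha; have := hK b hb
    simp only at hab
    omega
  · rw [disjoint_left]
    rintro _ hi hi'
    obtain ⟨a, ha, rfl⟩ := mem_image.1 hi
    obtain ⟨b, hb, hab⟩ := mem_image.1 hi'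
    have := hK a ha; have := hK b hb
    simp only [id] at hab
    omega

theorem bernoulliExpect_zero_pow_pairCount_le {m N : ℕ} (hN : N < m) :
    bernoulliExpect (range m) prob (fun s => 0 ^ pairCount ↑s N) ≤ Real.exp (-pairMean N) := by
  rw [bernoulliExpect_pow_pairCount hN, pairMean, ← sum_neg_distrib]
  refine (Real.prod_one_add_le_exp_sum_of_neg_one_le _ fun a _ => ?_).trans_eq (by simp)
  nlinarith [prob_nonneg a, prob_le_one a, prob_nonneg (N - a), prob_le_one (N - a)]

theorem bernoulliExpect_exp_one_pow_pairCount_le {m N : ℕ} (hN : N < m) :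
    bernoulliExpect (range m) prob (fun s => Real.exp 1 ^ pairCount ↑s N)
      ≤ Real.exp (2 * pairMean N) := by
  have he : Real.exp 1 - 1 ≤ 2 := by linarith [Real.exp_one_lt_d9]
  have hpp : ∀ a, 0 ≤ prob a * prob (N - a) := fun a =>
    mul_nonneg (prob_nonneg a) (prob_nonneg _)
  rw [bernoulliExpect_pow_pairCount hN, pairMean, mul_sum]
  refine (Real.prod_one_add_le_exp_sum _ fun a => ?_).trans (Real.exp_le_exp.2 ?_)
  · exact mul_nonneg (by linarith [Real.add_one_le_exp 1]) (hpp a)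
  · exact sum_le_sum fun a _ => mul_le_mul_of_nonneg_right he (hpp a)

/-- Dominates the indicator of `pairCount A N = 0 ∨ 67 log (N + 3) ≤ pairCount A N`, the second
term by Markov's inequality for `exp (pairCount A N)`. Here `67 = 2 * 32 + 3` comes from
`E[e ^ T] ≤ exp (2 λ)` and `λ ≤ 32 log (N + 3)`. -/
noncomputable def pairPenalty (A : Set ℕ) (N : ℕ) : ℝ :=
  0 ^ pairCount A N + Real.exp (-(67 * Real.log (N + 3))) * Real.exp 1 ^ pairCount A N

theorem pairPenalty_nonneg (A : Set ℕ) (N : ℕ) : 0 ≤ pairPenalty A N := by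
  unfold pairPenalty; positivity

theorem pairCount_pos_and_lt_of_pairPenalty_lt_one {A : Set ℕ} {N : ℕ}
    (h : pairPenalty A N < 1) :
    0 < pairCount A N ∧ (pairCount A N : ℝ) < 67 * Real.log (N + 3) := by
  rw [pairPenalty] at h
  have hexp : 0 < Real.exp (-(67 * Real.log (N + 3))) * Real.exp 1 ^ pairCount A N := by
    positivity
  refine ⟨Nat.pos_of_ne_zero fun h0 => ?_, ?_⟩
  · simp only [h0, pow_zero] at h hexp
    linarith
  · have h' : Real.exp (-(67 * Real.log (N + 3)) + pairCount A N) < 1 := by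
      rw [Real.exp_add, ← Real.exp_one_pow]
      linarith [pow_nonneg (le_refl (0 : ℝ)) (pairCount A N)]
    linarith [Real.exp_lt_one_iff.1 h']

theorem bernoulliExpect_pairPenalty_le {m N : ℕ} (hN : N < m)
    (hmean : 3 * Real.log (N + 3) ≤ pairMean N) :
    bernoulliExpect (range m) prob (fun s => pairPenalty ↑s N) ≤ 2 / ((N : ℝ) + 3) ^ 3 := by
  have hcube : Real.exp (-(3 * Real.log (N + 3))) = 1 / ((N : ℝ) + 3) ^ 3 := by
    rw [Real.exp_neg, ← Real.log_rpow (by positivity), Real.exp_log (by positivity), one_div]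
    norm_cast
  have hmean_le := pairMean_le N
  unfold pairPenalty
  rw [bernoulliExpect_add, bernoulliExpect_const_mul]
  calc _ ≤ Real.exp (-pairMean N)
        + Real.exp (-(67 * Real.log (N + 3))) * Real.exp (2 * pairMean N) := by
        gcongr
        · exact bernoulliExpect_zero_pow_pairCount_le hN
        · exact bernoulliExpect_exp_one_pow_pairCount_le hN
    _ ≤ Real.exp (-(3 * Real.log (N + 3))) + Real.exp (-(3 * Real.log (N + 3))) := by
        rw [← Real.exp_add]
        gcongr
        linarith
    _ = 2 / ((N : ℝ) + 3) ^ 3 := by rw [hcube]; ring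

theorem exists_finset_pairCount {N₀ : ℕ}
    (hN₀ : ∀ N ≥ N₀, 3 * Real.log (N + 3) ≤ pairMean N) (m : ℕ) :
    ∃ s : Finset ℕ, ∀ N ∈ Ico N₀ m,
      0 < pairCount ↑s N ∧ (pairCount ↑s N : ℝ) < 67 * Real.log (N + 3) := by
  obtain ⟨s, -, hs⟩ := exists_le_bernoulliExpect (range m) prob (fun i _ => prob_nonneg i)
    (fun i _ => prob_le_one i) (fun s => ∑ N ∈ Ico N₀ m, pairPenalty ↑s N)
  have hmean :
      bernoulliExpect (range m) prob (fun s => ∑ N ∈ Ico N₀ m, pairPenalty ↑s N) < 1 := by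
    rw [bernoulliExpect_sum]
    calc _ ≤ ∑ N ∈ Ico N₀ m, 2 / ((N : ℝ) + 3) ^ 3 := sum_le_sum fun N hN =>
          bernoulliExpect_pairPenalty_le (mem_Ico.1 hN).2 (hN₀ N (mem_Ico.1 hN).1)
      _ ≤ ∑ N ∈ range m, 2 / ((N : ℝ) + 3) ^ 3 :=
          sum_le_sum_of_subset_of_nonneg (range_eq_Ico m ▸ Ico_subset_Ico_left N₀.zero_le)
            fun _ _ _ => by positivity
      _ < 1 := sum_range_two_div_cube_lt_one m
  refine ⟨s, fun N hN => pairCount_pos_and_lt_of_pairPenalty_lt_one ?_⟩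
  exact ((single_le_sum (fun N _ => pairPenalty_nonneg _ N) hN).trans hs).trans_lt hmean

theorem pairCount_congr {A B : Set ℕ} {N : ℕ} (h : ∀ n ≤ N, n ∈ A ↔ n ∈ B) :
    pairCount A N = pairCount B N := by
  unfold pairCount
  congr 1
  ext a
  simp only [mem_filter, mem_range]
  exact and_congr_right fun ha => by rw [h a (by omega), h (N - a) (by omega)]

theorem exists_set_pairCount {N₀ : ℕ}
    (hN₀ : ∀ N ≥ N₀, 3 * Real.log (N + 3) ≤ pairMean N) : ∃ A : Set ℕ, ∀ N ≥ N₀,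
      0 < pairCount A N ∧ (pairCount A N : ℝ) < 67 * Real.log (N + 3) := by
  refine exists_set_forall_of_forall_lt (fun N A B h => by rw [pairCount_congr h]; exact id)
    fun m => ?_
  obtain ⟨s, hs⟩ := exists_finset_pairCount hN₀ m
  exact ⟨s, fun N hNm hN => hs N (mem_Ico.2 ⟨hN, hNm⟩)⟩

theorem exists_add_eq_of_pairCount_pos {A : Set ℕ} {N : ℕ} (h : 0 < pairCount A N) :
    ∃ a ∈ A, ∃ a' ∈ A, a + a' = N := by
  classical
  rw [pairCount] at h
  obtain ⟨a, ha⟩ := card_pos.1 h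
  simp only [mem_filter, mem_range] at ha
  exact ⟨a, ha.2.1, N - a, ha.2.2, by omega⟩

theorem pairCount_union_Iio_le (A : Set ℕ) (n N : ℕ) :
    pairCount (A ∪ Set.Iio n) N ≤ pairCount A N + 2 * n := by
  classical
  unfold pairCount
  set P := {a ∈ range ((N + 1) / 2) | a ∈ A ∧ N - a ∈ A}
  calc _ ≤ #(P ∪ range n ∪ (range n).image (N - ·)) := by
        refine card_le_card fun a ha => ?_
        simp only [mem_filter, mem_range, Set.mem_union, Set.mem_Iio] at ha
        simp only [P, mem_union, mem_filter, mem_range, mem_image]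
        by_cases han : a < n
        · exact Or.inl (Or.inr han)
        by_cases hNa : N - a < n
        · exact Or.inr ⟨N - a, hNa, by omega⟩
        · exact Or.inl (Or.inl ⟨ha.1, ha.2.1.resolve_right han, ha.2.2.resolve_right hNa⟩)
    _ ≤ #P + 2 * n := by
        grw [card_union_le, card_union_le, card_image_le, card_range]
        omega

theorem ncard_repr_le_two_mul_pairCount_add_one (A : Set ℕ) (N : ℕ) :
    {q : ℕ × ℕ | q.1 ∈ A ∧ q.2 ∈ A ∧ q.1 + q.2 = N}.ncard
      ≤ 2 * pairCount A N + 1 := by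
  classical
  set P := {a ∈ range ((N + 1) / 2) | a ∈ A ∧ N - a ∈ A}
  set Q := P.image (fun a => (a, N - a)) ∪ P.image (fun a => (N - a, a)) ∪ {(N / 2, N / 2)}
  have hsub : {q : ℕ × ℕ | q.1 ∈ A ∧ q.2 ∈ A ∧ q.1 + q.2 = N} ⊆ ↑Q := by
    rintro ⟨x, y⟩ ⟨hx, hy, rfl⟩
    simp only [Q, coe_union, coe_image, coe_singleton, Set.mem_union, Set.mem_image, mem_coe, P,
      mem_filter, mem_range, Prod.mk.injEq, Set.mem_singleton_iff]
    rcases lt_trichotomy x y with h | h | h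
    · exact Or.inl (Or.inl
        ⟨x, ⟨by omega, hx, by rwa [Nat.add_sub_cancel_left]⟩, rfl, by omega⟩)
    · exact Or.inr ⟨by omega, by omega⟩
    · exact Or.inl (Or.inr ⟨y, ⟨by omega, hy, by rwa [Nat.add_sub_cancel]⟩, by omega, rfl⟩)
  calc _ ≤ #Q := by
        rw [← Set.ncard_coe_finset]
        exact Set.ncard_le_ncard hsub (finite_toSet _)
    _ ≤ #P + #P + 1 := by
        grw [card_union_le, card_union_le, card_image_le, card_image_le, card_singleton]
    _ = 2 * pairCount A N + 1 := by rw [pairCount]; ring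

end ThinBasis

theorem stmt12 :
    ∃ A : Set ℕ,
      (∀ n : ℕ, ∃ a ∈ A, ∃ a' ∈ A, a + a' = n) ∧
      ∀ ε : ℝ, 0 < ε →
        Tendsto (fun N : ℕ =>
            (({q : ℕ × ℕ | q.1 ∈ A ∧ q.2 ∈ A ∧ q.1 + q.2 = N}).ncard : ℝ) / (N : ℝ) ^ ε)
          atTop (nhds 0) := by
  open ThinBasis in
  obtain ⟨N₀, hN₀⟩ := eventually_atTop.1 eventually_le_pairMean
  obtain ⟨A, hA⟩ := exists_set_pairCount hN₀
  refine ⟨A ∪ Set.Iio N₀, fun n => ?_, fun ε hε => ?_⟩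
  · rcases lt_or_ge n N₀ with hn | hn
    · exact ⟨n, Or.inr hn, 0, Or.inr (by simp only [Set.mem_Iio]; omega), n.add_zero⟩
    · obtain ⟨a, ha, a', ha', h⟩ := exists_add_eq_of_pairCount_pos (hA n hn).1
      exact ⟨a, Or.inl ha, a', Or.inl ha', h⟩
  · refine tendsto_div_rpow_of_le_log (C := 134) (D := 4 * N₀ + 1) hε
      (fun N => Nat.cast_nonneg _) ?_
    filter_upwards [eventually_ge_atTop N₀] with N hN
    have hrepr := (ncard_repr_le_two_mul_pairCount_add_one (A ∪ Set.Iio N₀) N).trans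
      (Nat.add_le_add_right (Nat.mul_le_mul_left 2 (pairCount_union_Iio_le A N₀ N)) 1)
    refine (Nat.cast_le.2 hrepr).trans ?_
    push_cast
    linarith [(hA N hN).2]
end
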